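/- Classical achievability of the CUSUM trade-off: Assume supp q ⊆ supp p, D := D(q‖p) > 0, let α ∈ (0,1), and set h := log(1/α). Then the CUSUM stopping time T* with threshold h satisfies E_∞[T*] ≥ 1/α, and for every ν ≥ 0 and every x^ν ∈ X^ν with P_∞(T* > ν, X^ν = x^ν) > 0, E_ν[T* − ν | T* > ν, X^ν = x^ν] ≤ (log(1/α) + C)/D, where C := max_{x ∈ supp q} log(q(x)/p(x)). -/

import Mathlib

open MeasureTheory ProbabilityTheory Real Filter
open scoped ENNReal NNReal

noncomputable section

namespace QCPD

variable {X : Type*}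

/-- The measure on `X` induced by a probability mass function `p`. -/
def pmfMeasure [Fintype X] [MeasurableSpace X] (p : X → ℝ) : Measure X :=
  ∑ x : X, ENNReal.ofReal (p x) • Measure.dirac x

/-- `p` is a probability mass function on the finite type `X`. -/
def IsPMF [Fintype X] (p : X → ℝ) : Prop := (∀ x, 0 ≤ p x) ∧ ∑ x, p x = 1

/-- Under `P`, the coordinates of `Ω = ℕ → X` are independent and the `i`-th
coordinate (representing `X_{i+1}`) has law given by the pmf `r i`.  For i.i.d.
pmfs this characterizes the infinite product measure. -/
def HasLaw [Fintype X] [MeasurableSpace X] (P : Measure (ℕ → X)) (r : ℕ → X → ℝ) : Prop :=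
  iIndepFun (fun i (ω : ℕ → X) => ω i) P ∧
    ∀ i, P.map (fun ω => ω i) = pmfMeasure (r i)

/-- The log-likelihood ratio `log (q x / p x)`, valued in the extended reals,
with the conventions `log 0 = −∞` (and `log ∞ = ∞`). -/
def llr (p q : X → ℝ) (x : X) : EReal :=
  ENNReal.log (ENNReal.ofReal (q x) / ENNReal.ofReal (p x))

/-- `S_n = ∑_{i=1}^n Z_i` where `Z_i = log (q (X_i) / p (X_i))`; the `i`-th
coordinate of `ω` represents `X_{i+1}`. -/
def llrSum (p q : X → ℝ) (n : ℕ) (ω : ℕ → X) : EReal :=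
  ∑ i ∈ Finset.range n, llr p q (ω i)

/-- `T₁ = inf {n ≥ 1 : S_n ≥ h}`, with value `∞` if no such `n` exists. -/
def T1 (p q : X → ℝ) (h : ℝ) (ω : ℕ → X) : ℕ∞ :=
  sInf ((↑) '' {n : ℕ | 1 ≤ n ∧ (h : EReal) ≤ llrSum p q n ω})

/-- Kullback–Leibler divergence `D(q‖p) = ∑_{x ∈ supp q} q x · log (q x / p x)`. -/
def KL [Fintype X] (q p : X → ℝ) : ℝ :=
  ∑ x ∈ Finset.univ.filter (fun x => 0 < q x), q x * Real.log (q x / p x)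

/-- `T_j` (here `j : ℕ` represents the 1-indexed start `j+1`, so all starts
`j ≥ 1` are covered): the first time `n ≥ j+1` such that
`∑_{i=j+1}^n log (q (X_i) / p (X_i)) ≥ h`, and `∞` if there is no such `n`. -/
def Tj (p q : X → ℝ) (h : ℝ) (j : ℕ) (ω : ℕ → X) : ℕ∞ :=
  sInf ((↑) '' {n : ℕ | j + 1 ≤ n ∧ (h : EReal) ≤ ∑ i ∈ Finset.Ico j n, llr p q (ω i)})

/-- The CUSUM stopping time `T* = inf_{j ≥ 1} T_j` with threshold `h`. -/
def Tstar (p q : X → ℝ) (h : ℝ) (ω : ℕ → X) : ℕ∞ := ⨅ j : ℕ, Tj p q h j ω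

/-! The false-alarm bound is optional stopping for the Shiryaev–Roberts statistic
`R_n = ∑_{j ≤ n} ∏_{j ≤ i ≤ n} q(X_i)/p(X_i)`: under `P_∞`, `R_n - n` is a martingale, so
`E_∞[R_{T*∧n}] = E_∞[T*∧n]`, while `R_{T*} ≥ e^h` because some CUSUM sum has just crossed `h`.

The detection-delay bound is Wald's identity for the walk `S_m = ∑_{ν < i ≤ ν+m} log(q/p)(X_i)`
started at the change point: it has drift `D` under `P_ν`, and stopped at its first passage
above `h` it is at most `h + C`.  Since `T* ≤ T_{ν+1}` and that passage time only looks at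
`X_{ν+1}, X_{ν+2}, …`, which are independent of `X^ν`, conditioning on `{T* > ν, X^ν = x^ν}`
costs nothing. -/

theorem _root_.ENNReal.log_prod {ι : Type*} (s : Finset ι) (f : ι → ℝ≥0∞) :
    ENNReal.log (∏ i ∈ s, f i) = ∑ i ∈ s, ENNReal.log (f i) := by
  induction s using Finset.cons_induction with
  | empty => simp
  | cons a s ha ih => rw [Finset.prod_cons, Finset.sum_cons, ENNReal.log_mul_add, ih]

lemma sInf_natCast_image_le_iff {S : Set ℕ} {n : ℕ} :
    sInf (((↑) : ℕ → ℕ∞) '' S) ≤ n ↔ ∃ m ∈ S, m ≤ n := by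
  refine ⟨fun hle => ?_, fun ⟨m, hm, hmn⟩ =>
    (sInf_le (Set.mem_image_of_mem _ hm)).trans (by exact_mod_cast hmn)⟩
  rcases S.eq_empty_or_nonempty with rfl | hS
  · simp at hle
  · obtain ⟨m, hm, hmeq⟩ := csInf_mem (hS.image ((↑) : ℕ → ℕ∞))
    exact ⟨m, hm, by rw [← hmeq] at hle; exact_mod_cast hle⟩

lemma iInf_le_natCast_iff {ι : Type*} [Nonempty ι] {f : ι → ℕ∞} {n : ℕ} :
    ⨅ i, f i ≤ n ↔ ∃ i, f i ≤ n := by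
  refine ⟨fun hle => ?_, fun ⟨i, hi⟩ => (iInf_le f i).trans hi⟩
  obtain ⟨i, hi⟩ := ciInf_mem f
  exact ⟨i, hi ▸ hle⟩

section Truncation

def minNat (t : ℕ∞) (n : ℕ) : ℕ := (min t n).toNat

lemma natCast_minNat (t : ℕ∞) (n : ℕ) : (minNat t n : ℕ∞) = min t n :=
  ENat.natCast_toNat ((min_le_right t n).trans_lt (ENat.natCast_lt_top n)).ne

lemma natCast_lt_of_lt_minNat {t : ℕ∞} {k n : ℕ} (hk : k < minNat t n) : (k : ℕ∞) < t :=
  ((Nat.cast_lt.2 hk).trans_eq (natCast_minNat t n)).trans_le (min_le_left t n)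

lemma minNat_of_le {t : ℕ∞} {n : ℕ} (h : (n : ℕ∞) ≤ t) : minNat t n = n := by
  simp [minNat, min_eq_right h]

lemma minNat_natCast_of_le {t n : ℕ} (h : t ≤ n) : minNat t n = t := by
  simp [minNat, h]

lemma minNat_succ (t : ℕ∞) (n : ℕ) :
    minNat t (n + 1) = minNat t n + if (n : ℕ∞) < t then 1 else 0 := by
  split_ifs with h
  · rw [minNat_of_le h.le, minNat_of_le (by exact_mod_cast Order.add_one_le_of_lt h)]
  · have h' : t ≤ n := not_lt.1 h
    simp [minNat, min_eq_left h', min_eq_left (h'.trans (by simp : (n : ℕ∞) ≤ n + 1))]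

lemma minNat_mono (t : ℕ∞) : Monotone (minNat t) :=
  monotone_nat_of_le_succ fun n => by rw [minNat_succ]; omega

lemma iSup_minNat (t : ℕ∞) : ⨆ n, (minNat t n : ℝ≥0∞) = t := by
  have h : ⨆ n : ℕ, min t n = t := by rw [← inf_iSup_eq, ENat.iSup_natCast, inf_top_eq]
  simp_rw [← ENat.toENNReal_coe, natCast_minNat, ← ENat.toENNReal_iSup, h]

lemma natCast_minNat_le_toENNReal (t : ℕ∞) (n : ℕ) : (minNat t n : ℝ≥0∞) ≤ t :=
  iSup_minNat t ▸ le_iSup (fun n => (minNat t n : ℝ≥0∞)) n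

lemma comp_minNat_eq_add_sum_indicator {Ω β : Type*} [AddCommGroup β] (τ : Ω → ℕ∞)
    (Y : ℕ → Ω → β) (n : ℕ) :
    (fun ω => Y (minNat (τ ω) n) ω) = fun ω => Y 0 ω +
      ∑ k ∈ Finset.range n, {ω | (k : ℕ∞) < τ ω}.indicator (fun ω => Y (k + 1) ω - Y k ω) ω := by
  induction n with
  | zero => funext ω; simp [minNat]
  | succ n ih =>
    funext ω
    rw [Finset.sum_range_succ, ← add_assoc, ← congrFun ih ω]
    simp only [minNat_succ, Set.indicator_apply, Set.mem_ofPred_eq]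
    split_ifs with h
    · rw [minNat_of_le h.le]; abel
    · simp

end Truncation

section StoppedProcess

variable {Ω : Type*} [MeasurableSpace Ω] {P : Measure Ω} {τ : Ω → ℕ∞}

lemma measurable_minNat (hτ : ∀ k : ℕ, MeasurableSet {ω | (k : ℕ∞) < τ ω}) (n : ℕ) :
    Measurable fun ω => minNat (τ ω) n := by
  induction n with
  | zero => simp [minNat]
  | succ n ih =>
    simp_rw [minNat_succ]
    exact ih.add (Measurable.ite (hτ n) measurable_const measurable_const)

lemma dependsOn_minNat {ι : Type*} {α : ι → Type*} {τ : (∀ i, α i) → ℕ∞} {S : Set ι} {n : ℕ}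
    (hτ : ∀ k < n, DependsOn (fun ω => (k : ℕ∞) < τ ω) S) :
    DependsOn (fun ω => minNat (τ ω) n) S := by
  induction n with
  | zero => exact fun _ _ _ => by simp [minNat]
  | succ n ih =>
    intro ω ω' hω
    simp only [minNat_succ, ih (fun k hk => hτ k (by omega)) hω]
    exact congrArg _ (if_congr (Iff.of_eq (hτ n (by omega) hω)) rfl rfl)

lemma integrable_comp_minNat [IsFiniteMeasure P]
    (hτ : ∀ k : ℕ, MeasurableSet {ω | (k : ℕ∞) < τ ω}) {Y : ℕ → Ω → ℝ}
    (hY : ∀ k, Integrable (Y k) P) (n : ℕ) :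
    Integrable (fun ω => Y (minNat (τ ω) n) ω) P := by
  rw [comp_minNat_eq_add_sum_indicator]
  exact (hY 0).add (integrable_finsetSum _ fun k _ => ((hY (k + 1)).sub (hY k)).indicator (hτ k))

lemma integral_comp_minNat_eq_add_sum
    (hτ : ∀ k : ℕ, MeasurableSet {ω | (k : ℕ∞) < τ ω}) {Y : ℕ → Ω → ℝ}
    (hY : ∀ k, Integrable (Y k) P) (n : ℕ) :
    ∫ ω, Y (minNat (τ ω) n) ω ∂P = ∫ ω, Y 0 ω ∂P +
      ∑ k ∈ Finset.range n, ∫ ω in {ω | (k : ℕ∞) < τ ω}, (Y (k + 1) ω - Y k ω) ∂P := by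
  have hinc (k : ℕ) :
      Integrable ({ω | (k : ℕ∞) < τ ω}.indicator fun ω => Y (k + 1) ω - Y k ω) P :=
    ((hY (k + 1)).sub (hY k)).indicator (hτ k)
  rw [comp_minNat_eq_add_sum_indicator,
    integral_add (hY 0) (integrable_finsetSum _ fun k _ => hinc k),
    integral_finsetSum _ fun k _ => hinc k]
  simp only [integral_indicator (hτ _)]

theorem integral_comp_minNat [IsFiniteMeasure P]
    (hτ : ∀ k : ℕ, MeasurableSet {ω | (k : ℕ∞) < τ ω}) {Y : ℕ → Ω → ℝ}
    (hY : ∀ k, Integrable (Y k) P) {c : ℝ}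
    (hinc : ∀ k : ℕ, ∫ ω in {ω | (k : ℕ∞) < τ ω}, (Y (k + 1) ω - Y k ω) ∂P =
      c * P.real {ω | (k : ℕ∞) < τ ω}) (n : ℕ) :
    ∫ ω, Y (minNat (τ ω) n) ω ∂P = ∫ ω, Y 0 ω ∂P + c * ∫ ω, (minNat (τ ω) n : ℝ) ∂P := by
  have hcount := integral_comp_minNat_eq_add_sum hτ (Y := fun k _ => (k : ℝ))
    (fun _ => integrable_const (μ := P) _) n
  simp only [Nat.cast_add, Nat.cast_one, add_sub_cancel_left, setIntegral_const, smul_eq_mul,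
    mul_one, Nat.cast_zero, integral_zero, zero_add] at hcount
  rw [integral_comp_minNat_eq_add_sum hτ hY, hcount, Finset.mul_sum]
  simp only [hinc]

lemma lintegral_minNat_eq_ofReal_integral [IsFiniteMeasure P]
    (hτ : ∀ k : ℕ, MeasurableSet {ω | (k : ℕ∞) < τ ω}) (n : ℕ) :
    ∫⁻ ω, (minNat (τ ω) n : ℝ≥0∞) ∂P = ENNReal.ofReal (∫ ω, (minNat (τ ω) n : ℝ) ∂P) := by
  rw [ofReal_integral_eq_lintegral_ofReal
    (integrable_comp_minNat hτ (Y := fun k _ => (k : ℝ)) (fun k => integrable_const _) n)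
    (ae_of_all _ fun ω => Nat.cast_nonneg _)]
  simp only [ENNReal.ofReal_natCast]

lemma lintegral_eq_iSup_lintegral_minNat (hτ : ∀ k : ℕ, MeasurableSet {ω | (k : ℕ∞) < τ ω}) :
    ∫⁻ ω, (τ ω : ℝ≥0∞) ∂P = ⨆ n, ∫⁻ ω, (minNat (τ ω) n : ℝ≥0∞) ∂P := by
  simp_rw [← iSup_minNat]
  exact lintegral_iSup (fun n => measurable_from_nat.comp (measurable_minNat hτ n))
    fun m n hmn ω => by exact_mod_cast minNat_mono _ hmn

lemma le_lintegral_of_forall_mul_measure_le [IsProbabilityMeasure P]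
    (hτ : ∀ k : ℕ, MeasurableSet {ω | (k : ℕ∞) < τ ω}) {c : ℝ≥0∞}
    (hc : ∀ n : ℕ, c * P {ω | τ ω ≤ n} ≤ ∫⁻ ω, (τ ω : ℝ≥0∞) ∂P) :
    c ≤ ∫⁻ ω, (τ ω : ℝ≥0∞) ∂P := by
  have hmeas : Measurable fun ω => (τ ω : ℝ≥0∞) := by
    simp_rw [← iSup_minNat]
    exact Measurable.iSup fun n => measurable_from_nat.comp (measurable_minNat hτ n)
  have htop : {ω | τ ω = ⊤} = (fun ω => (τ ω : ℝ≥0∞)) ⁻¹' {⊤} := by ext; simp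
  by_cases h0 : P {ω | τ ω = ⊤} = 0
  · have hunion : ⋃ n : ℕ, {ω | τ ω ≤ n} = {ω | τ ω = ⊤}ᶜ := by
      ext ω
      simp only [Set.mem_iUnion, Set.mem_ofPred_eq, Set.mem_compl_iff]
      exact ⟨fun ⟨n, hn⟩ => ne_top_of_le_ne_top (ENat.natCast_ne_top n) hn,
        fun h => let ⟨m, hm⟩ := ENat.ne_top_iff_exists.1 h; ⟨m, hm.ge⟩⟩
    have hsup : ⨆ n : ℕ, P {ω | τ ω ≤ n} = 1 := by
      rw [← Monotone.measure_iUnion (s := fun n : ℕ => {ω | τ ω ≤ n})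
          fun m n hmn ω (hω : τ ω ≤ m) => hω.trans (by exact_mod_cast hmn),
        hunion, prob_compl_eq_one_iff (htop ▸ hmeas (measurableSet_singleton ⊤))]
      exact h0
    calc c = ⨆ n : ℕ, c * P {ω | τ ω ≤ n} := by rw [← ENNReal.mul_iSup, hsup, mul_one]
      _ ≤ _ := iSup_le hc
  · rw [lintegral_eq_top_of_measure_eq_top_ne_zero hmeas.aemeasurable (by simpa [htop] using h0)]
    exact le_top

end StoppedProcess

section Coordinates

variable {X : Type*} [MeasurableSpace X] [DiscreteMeasurableSpace X] [Finite X]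

theorem _root_.DependsOn.measurable {β : Type*} [MeasurableSpace β] [Nonempty β]
    {f : (ℕ → X) → β} {S : Finset ℕ} (hf : DependsOn f S) : Measurable f := by
  obtain ⟨g, rfl⟩ := dependsOn_iff_exists_comp.1 hf
  exact Measurable.of_discrete.comp (measurable_pi_lambda _ fun i => measurable_pi_apply _)

lemma _root_.DependsOn.measurableSet {A : Set (ℕ → X)} {S : Finset ℕ}
    (hA : DependsOn (· ∈ A) S) : MeasurableSet A :=
  measurableSet_setOfPred.2 hA.measurable

lemma _root_.DependsOn.indicator {M : Type*} [Zero M] {ι : Type*} {α : ι → Type*}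
    {A : Set (∀ i, α i)} {f : (∀ i, α i) → M} {S : Set ι} (hA : DependsOn (· ∈ A) S)
    (hf : DependsOn f S) : DependsOn (A.indicator f) S := fun ω ω' h => by
  by_cases hω : ω ∈ A
  · rw [Set.indicator_of_mem hω, Set.indicator_of_mem ((Iff.of_eq (hA h)).1 hω), hf h]
  · rw [Set.indicator_of_notMem hω, Set.indicator_of_notMem (mt (Iff.of_eq (hA h)).2 hω)]

theorem _root_.DependsOn.integrable {f : (ℕ → X) → ℝ} {S : Finset ℕ} (hf : DependsOn f S)
    (μ : Measure (ℕ → X)) [IsFiniteMeasure μ] : Integrable f μ := by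
  obtain ⟨g, rfl⟩ := dependsOn_iff_exists_comp.1 hf
  obtain ⟨C, hC⟩ := (Set.finite_range fun v => ‖g v‖).bddAbove
  exact Integrable.of_bound hf.measurable.aestronglyMeasurable C
    (ae_of_all _ fun ω => hC ⟨_, rfl⟩)

theorem _root_.DependsOn.indepFun {β γ : Type*} [MeasurableSpace β] [MeasurableSpace γ]
    [Nonempty β] [Nonempty γ] {P : Measure (ℕ → X)}
    (hP : iIndepFun (fun i (ω : ℕ → X) => ω i) P) {S T : Finset ℕ} (hST : Disjoint S T)
    {f : (ℕ → X) → β} {g : (ℕ → X) → γ} (hf : DependsOn f S) (hg : DependsOn g T) :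
    IndepFun f g P := by
  obtain ⟨f', rfl⟩ := dependsOn_iff_exists_comp.1 hf
  obtain ⟨g', rfl⟩ := dependsOn_iff_exists_comp.1 hg
  exact (hP.indepFun_finset S T hST fun i => measurable_pi_apply i).comp
    Measurable.of_discrete Measurable.of_discrete

lemma setLIntegral_eq_measure_mul_lintegral {P : Measure (ℕ → X)}
    (hP : iIndepFun (fun i (ω : ℕ → X) => ω i) P) {S T : Finset ℕ} (hST : Disjoint S T)
    {A : Set (ℕ → X)} (hA : DependsOn (· ∈ A) S) {f : (ℕ → X) → ℝ≥0∞} (hf : DependsOn f T) :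
    ∫⁻ ω in A, f ω ∂P = P A * ∫⁻ ω, f ω ∂P := by
  have hA1 : DependsOn (A.indicator (1 : (ℕ → X) → ℝ≥0∞)) S :=
    hA.indicator fun _ _ _ => rfl
  rw [← lintegral_indicator hA.measurableSet, ← lintegral_indicator_one hA.measurableSet,
    ← lintegral_mul_eq_lintegral_mul_lintegral_of_indepFun hA1.measurable hf.measurable
      (hA1.indepFun hP hST hf)]
  congr 1 with ω
  by_cases hω : ω ∈ A <;> simp [hω]

end Coordinates

section Laws

variable {X : Type*} [Fintype X] [MeasurableSpace X] [DiscreteMeasurableSpace X]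

lemma integral_pmfMeasure {r : X → ℝ} (hr : ∀ x, 0 ≤ r x) (φ : X → ℝ) :
    ∫ x, φ x ∂pmfMeasure r = ∑ x, r x * φ x := by
  rw [pmfMeasure, integral_finsetSum_measure fun x _ => (Integrable.of_finite).smul_measure
    ENNReal.ofReal_ne_top]
  refine Finset.sum_congr rfl fun x _ => ?_
  rw [integral_smul_measure, integral_dirac, smul_eq_mul, ENNReal.toReal_ofReal (hr x)]

lemma HasLaw.integral_comp_coord {P : Measure (ℕ → X)} {r : ℕ → X → ℝ} (hP : HasLaw P r)
    {j : ℕ} (hr : ∀ x, 0 ≤ r j x) (φ : X → ℝ) : ∫ ω, φ (ω j) ∂P = ∑ x, r j x * φ x := by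
  rw [← integral_map (measurable_pi_apply j).aemeasurable
    Measurable.of_discrete.aestronglyMeasurable, hP.2 j, integral_pmfMeasure hr]

lemma HasLaw.ae_pos {P : Measure (ℕ → X)} {r : ℕ → X → ℝ} (hP : HasLaw P r) (j : ℕ) :
    ∀ᵐ ω ∂P, 0 < r j (ω j) := by
  rw [ae_iff, show {ω : ℕ → X | ¬0 < r j (ω j)} = (fun ω => ω j) ⁻¹' {x | r j x ≤ 0} by
    ext; simp, ← Measure.map_apply (measurable_pi_apply j) MeasurableSet.of_discrete, hP.2 j,
    pmfMeasure, Measure.coe_finsetSum, Finset.sum_apply]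
  refine Finset.sum_eq_zero fun x _ => ?_
  by_cases hx : r j x ≤ 0
  · simp [ENNReal.ofReal_of_nonpos hx]
  · simp [Measure.dirac_apply' _ MeasurableSet.of_discrete, hx]

lemma HasLaw.setIntegral_mul_comp_coord {P : Measure (ℕ → X)}
    {r : ℕ → X → ℝ} (hP : HasLaw P r) {S : Finset ℕ} {j : ℕ} (hj : j ∉ S)
    (hr : ∀ x, 0 ≤ r j x) {E : Set (ℕ → X)} (hE : DependsOn (· ∈ E) S)
    {F : (ℕ → X) → ℝ} (hF : DependsOn F S) (φ : X → ℝ) :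
    ∫ ω in E, F ω * φ (ω j) ∂P = (∫ ω in E, F ω ∂P) * ∑ x, r j x * φ x := by
  have hEF : DependsOn (E.indicator F) S := hE.indicator hF
  have hφ : DependsOn (fun ω : ℕ → X => φ (ω j)) ({j} : Finset ℕ) := fun (ω ω' : ℕ → X) h => by
    simp only [h j (by simp)]
  rw [← integral_indicator hE.measurableSet, ← integral_indicator hE.measurableSet,
    ← hP.integral_comp_coord hr]
  simp_rw [Set.indicator_mul_left]
  exact (hEF.indepFun hP.1 (Finset.disjoint_singleton_right.2 hj) hφ).integral_mul_eq_mul_integral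
    hEF.measurable.aestronglyMeasurable hφ.measurable.aestronglyMeasurable

end Laws

section LogLikelihood

variable {X : Type*} {p q : X → ℝ}

lemma llr_eq_log_ofReal_div (hp : ∀ x, 0 ≤ p x) (hsupp : ∀ x, 0 < q x → 0 < p x) (x : X) :
    llr p q x = ENNReal.log (ENNReal.ofReal (q x / p x)) := by
  rcases (hp x).lt_or_eq with hpx | hpx
  · rw [llr, ENNReal.ofReal_div_of_pos hpx]
  · have hqx : q x ≤ 0 := not_lt.1 fun hqx => (hsupp x hqx).ne' hpx.symm
    rw [llr, ← hpx, div_zero, ENNReal.ofReal_zero, ENNReal.ofReal_of_nonpos hqx, ENNReal.zero_div]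

lemma sum_llr_eq_log_prod (hp : ∀ x, 0 ≤ p x) (hq : ∀ x, 0 ≤ q x)
    (hsupp : ∀ x, 0 < q x → 0 < p x) {ι : Type*} (s : Finset ι) (y : ι → X) :
    ∑ i ∈ s, llr p q (y i) = ENNReal.log (ENNReal.ofReal (∏ i ∈ s, q (y i) / p (y i))) := by
  rw [ENNReal.ofReal_prod_of_nonneg fun i _ => div_nonneg (hq _) (hp _), ENNReal.log_prod]
  exact Finset.sum_congr rfl fun i _ => llr_eq_log_ofReal_div hp hsupp _

lemma exp_le_prod_of_le_sum_llr (hp : ∀ x, 0 ≤ p x) (hq : ∀ x, 0 ≤ q x)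
    (hsupp : ∀ x, 0 < q x → 0 < p x) {ι : Type*} {s : Finset ι} {y : ι → X} {h : ℝ}
    (hh : (h : EReal) ≤ ∑ i ∈ s, llr p q (y i)) :
    Real.exp h ≤ ∏ i ∈ s, q (y i) / p (y i) := by
  rwa [sum_llr_eq_log_prod hp hq hsupp, ← Real.log_exp h,
    ← ENNReal.log_ofReal_of_pos (Real.exp_pos h), ENNReal.log_le_log_iff,
    ENNReal.ofReal_le_ofReal_iff (Finset.prod_nonneg fun i _ => div_nonneg (hq _) (hp _))] at hh

lemma sum_llr_eq_coe (hp : ∀ x, 0 ≤ p x) (hq : ∀ x, 0 ≤ q x)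
    (hsupp : ∀ x, 0 < q x → 0 < p x) {ι : Type*} {s : Finset ι} {y : ι → X}
    (hpos : ∀ i ∈ s, 0 < q (y i)) :
    ∑ i ∈ s, llr p q (y i) = ((∑ i ∈ s, Real.log (q (y i) / p (y i)) : ℝ) : EReal) := by
  have hpos' : ∀ i ∈ s, 0 < q (y i) / p (y i) := fun i hi =>
    div_pos (hpos i hi) (hsupp _ (hpos i hi))
  rw [sum_llr_eq_log_prod hp hq hsupp, ENNReal.log_ofReal_of_pos (Finset.prod_pos hpos'),
    Real.log_prod fun i hi => (hpos' i hi).ne']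

variable [Fintype X]

lemma sum_mul_div_eq_one (hp : ∀ x, 0 ≤ p x) (hq : IsPMF q) (hsupp : ∀ x, 0 < q x → 0 < p x) :
    ∑ x, p x * (q x / p x) = 1 := by
  refine (Finset.sum_congr rfl fun x _ => ?_).trans hq.2
  rcases (hp x).lt_or_eq with hpx | hpx
  · exact mul_div_cancel₀ _ hpx.ne'
  · have hqx : q x = 0 := le_antisymm (not_lt.1 fun hqx => (hsupp x hqx).ne' hpx.symm) (hq.1 x)
    rw [← hpx, hqx, zero_mul]

lemma sum_mul_log_div_eq_KL (hq : ∀ x, 0 ≤ q x) : ∑ x, q x * Real.log (q x / p x) = KL q p := by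
  refine (Finset.sum_subset (Finset.filter_subset _ _) fun x _ hx => ?_).symm
  simp only [Finset.mem_filter, Finset.mem_univ, true_and, not_lt] at hx
  rw [le_antisymm hx (hq x), zero_mul]

lemma KL_le (hq : IsPMF q) {C : ℝ} (hC : ∀ x, 0 < q x → Real.log (q x / p x) ≤ C) :
    KL q p ≤ C := by
  rw [← sum_mul_log_div_eq_KL hq.1]
  calc ∑ x, q x * Real.log (q x / p x) ≤ ∑ x, q x * C := Finset.sum_le_sum fun x _ => by
        rcases (hq.1 x).lt_or_eq with hqx | hqx
        · exact mul_le_mul_of_nonneg_left (hC x hqx) hqx.le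
        · simp [← hqx]
    _ = C := by rw [← Finset.sum_mul, hq.2, one_mul]

end LogLikelihood

section Cusum

variable {X : Type*} (p q : X → ℝ) (h : ℝ)

lemma Tj_le_iff {j n : ℕ} {ω : ℕ → X} : Tj p q h j ω ≤ n ↔
    ∃ m, j < m ∧ m ≤ n ∧ (h : EReal) ≤ ∑ i ∈ Finset.Ico j m, llr p q (ω i) := by
  simp only [Tj, sInf_natCast_image_le_iff, Set.mem_ofPred_eq, and_assoc]
  exact exists_congr fun m => by tauto

lemma Tstar_le_iff {n : ℕ} {ω : ℕ → X} : Tstar p q h ω ≤ n ↔ ∃ j, Tj p q h j ω ≤ n :=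
  iInf_le_natCast_iff

lemma dependsOn_Tj_le (j n : ℕ) :
    DependsOn (fun ω : ℕ → X => Tj p q h j ω ≤ n) (Finset.Ico j n) := by
  intro ω ω' hω
  simp only [Tj_le_iff]
  refine propext (exists_congr fun m => and_congr_right fun _ => and_congr_right fun hmn => ?_)
  rw [Finset.sum_congr rfl fun i hi => congrArg (llr p q)
    (hω i (Finset.coe_subset.2 (Finset.Ico_subset_Ico_right hmn) hi))]

lemma dependsOn_natCast_lt_Tstar (n : ℕ) :
    DependsOn (fun ω : ℕ → X => (n : ℕ∞) < Tstar p q h ω) (Finset.range n) := by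
  intro ω ω' hω
  have hj : ∀ j, (Tj p q h j ω ≤ n) = (Tj p q h j ω' ≤ n) := fun j =>
    dependsOn_Tj_le p q h j n fun i hi => hω i (by simp at hi ⊢; omega)
  simp only [lt_iff_not_ge, Tstar_le_iff, hj]

lemma dependsOn_natCast_lt_Tj_sub (ν k : ℕ) :
    DependsOn (fun ω : ℕ → X => (k : ℕ∞) < Tj p q h ν ω - ν) (Finset.Ico ν (ν + k)) := by
  intro ω ω' hω
  have h' := dependsOn_Tj_le p q h ν (ν + k) hω
  simp only [lt_tsub_iff_left, ← Nat.cast_add]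
  simp only [lt_iff_not_ge, h']

end Cusum

section FalseAlarm

variable {X : Type*} (p q : X → ℝ)

def shiryaevRoberts (n : ℕ) (ω : ℕ → X) : ℝ :=
  ∑ j ∈ Finset.range n, ∏ i ∈ Finset.Ico j n, q (ω i) / p (ω i)

lemma shiryaevRoberts_succ (n : ℕ) (ω : ℕ → X) :
    shiryaevRoberts p q (n + 1) ω = (shiryaevRoberts p q n ω + 1) * (q (ω n) / p (ω n)) := by
  simp only [shiryaevRoberts, Finset.sum_range_succ, Finset.prod_Ico_succ_top le_rfl,
    Finset.Ico_self, Finset.prod_empty, one_mul, add_mul, Finset.sum_mul]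
  congr 1
  exact Finset.sum_congr rfl fun j hj =>
    Finset.prod_Ico_succ_top (Finset.mem_range.1 hj).le _

lemma dependsOn_shiryaevRoberts (n : ℕ) :
    DependsOn (shiryaevRoberts p q n) (Finset.range n) := fun ω ω' hω =>
  Finset.sum_congr rfl fun j _ => Finset.prod_congr rfl fun i hi => by
    rw [hω i (by simp at hi ⊢; omega)]

variable {p q}

lemma exp_le_shiryaevRoberts_of_Tstar_eq (hp : ∀ x, 0 ≤ p x) (hq : ∀ x, 0 ≤ q x)
    (hsupp : ∀ x, 0 < q x → 0 < p x) {h : ℝ} {ω : ℕ → X} {t : ℕ}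
    (ht : Tstar p q h ω = t) : Real.exp h ≤ shiryaevRoberts p q t ω := by
  obtain ⟨j, hj⟩ := (Tstar_le_iff p q h).1 ht.le
  obtain ⟨m, hjm, hmt, hsum⟩ := (Tj_le_iff p q h).1 hj
  -- `T* = t` forces the crossing found at time `m ≤ t` to happen exactly at `t`.
  obtain rfl : m = t := le_antisymm hmt <| by
    have := (Tstar_le_iff p q h).2 ⟨j, (Tj_le_iff p q h).2 ⟨m, hjm, le_rfl, hsum⟩⟩
    rw [ht] at this
    exact_mod_cast this
  calc Real.exp h ≤ ∏ i ∈ Finset.Ico j m, q (ω i) / p (ω i) :=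
        exp_le_prod_of_le_sum_llr hp hq hsupp hsum
    _ ≤ shiryaevRoberts p q m ω :=
        Finset.single_le_sum (f := fun j => ∏ i ∈ Finset.Ico j m, q (ω i) / p (ω i))
          (fun _ _ => Finset.prod_nonneg fun _ _ => div_nonneg (hq _) (hp _))
          (Finset.mem_range.2 hjm)

variable [Fintype X] [MeasurableSpace X] [DiscreteMeasurableSpace X]
  {P : Measure (ℕ → X)} [IsProbabilityMeasure P]

lemma setIntegral_shiryaevRoberts_succ_sub (hP : HasLaw P fun _ => p) (hp : ∀ x, 0 ≤ p x)
    (hq : IsPMF q) (hsupp : ∀ x, 0 < q x → 0 < p x) {k : ℕ} {E : Set (ℕ → X)}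
    (hE : DependsOn (· ∈ E) (Finset.range k)) :
    ∫ ω in E, (shiryaevRoberts p q (k + 1) ω - shiryaevRoberts p q k ω) ∂P = P.real E := by
  have hR : ∀ n, Integrable (shiryaevRoberts p q n) P := fun n =>
    (dependsOn_shiryaevRoberts p q n).integrable P
  have hR1 : DependsOn (fun ω => shiryaevRoberts p q k ω + 1) (Finset.range k) :=
    fun _ _ hω => congrArg (· + 1) (dependsOn_shiryaevRoberts p q k hω)
  have hmul := hP.setIntegral_mul_comp_coord Finset.notMem_range_self hp hE hR1
    fun x => q x / p x
  rw [integral_sub (hR _).integrableOn (hR _).integrableOn]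
  simp_rw [shiryaevRoberts_succ]
  rw [hmul, sum_mul_div_eq_one hp hq hsupp, mul_one,
    integral_add (hR _).integrableOn (integrable_const _), setIntegral_const, smul_eq_mul, mul_one,
    add_sub_cancel_left]

lemma exp_mul_measure_Tstar_le_le (hP : HasLaw P fun _ => p) (hp : ∀ x, 0 ≤ p x) (hq : IsPMF q)
    (hsupp : ∀ x, 0 < q x → 0 < p x) (h : ℝ) (n : ℕ) :
    ENNReal.ofReal (Real.exp h) * P {ω | Tstar p q h ω ≤ n} ≤
      ∫⁻ ω, (minNat (Tstar p q h ω) n : ℝ≥0∞) ∂P := by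
  have hτ : ∀ k : ℕ, MeasurableSet {ω | (k : ℕ∞) < Tstar p q h ω} := fun k =>
    (dependsOn_natCast_lt_Tstar p q h k).measurableSet
  have hR : ∀ n, Integrable (shiryaevRoberts p q n) P := fun n =>
    (dependsOn_shiryaevRoberts p q n).integrable P
  have hstop := integral_comp_minNat hτ hR (fun k => (setIntegral_shiryaevRoberts_succ_sub hP hp
    hq hsupp (dependsOn_natCast_lt_Tstar p q h k)).trans (one_mul _).symm) n
  have hcross : ∀ ω ∈ {ω | Tstar p q h ω ≤ n},
      Real.exp h ≤ shiryaevRoberts p q (minNat (Tstar p q h ω) n) ω := fun ω hω => by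
    obtain ⟨t, ht, htn⟩ := ENat.le_natCast_iff.1 hω
    rw [ht, minNat_natCast_of_le htn]
    exact exp_le_shiryaevRoberts_of_Tstar_eq hp hq.1 hsupp ht
  have hle : {ω | Tstar p q h ω ≤ n} = {ω | (n : ℕ∞) < Tstar p q h ω}ᶜ := by
    ext; simp
  calc ENNReal.ofReal (Real.exp h) * P {ω | Tstar p q h ω ≤ n}
      = ENNReal.ofReal (∫ _ in {ω | Tstar p q h ω ≤ n}, Real.exp h ∂P) := by
        rw [setIntegral_const, smul_eq_mul, ENNReal.ofReal_mul measureReal_nonneg,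
          ofReal_measureReal, mul_comm]
    _ ≤ ENNReal.ofReal (∫ ω, shiryaevRoberts p q (minNat (Tstar p q h ω) n) ω ∂P) := by
        refine ENNReal.ofReal_le_ofReal ((setIntegral_mono_on (integrable_const _).integrableOn
          (integrable_comp_minNat hτ hR n).integrableOn (hle ▸ (hτ n).compl) hcross).trans ?_)
        exact setIntegral_le_integral (integrable_comp_minNat hτ hR n) (ae_of_all _ fun ω =>
          Finset.sum_nonneg fun _ _ => Finset.prod_nonneg fun _ _ => div_nonneg (hq.1 _) (hp _))
    _ = ∫⁻ ω, (minNat (Tstar p q h ω) n : ℝ≥0∞) ∂P := by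
        rw [hstop, lintegral_minNat_eq_ofReal_integral hτ]
        simp [shiryaevRoberts]

theorem exp_le_lintegral_Tstar (hP : HasLaw P fun _ => p) (hp : ∀ x, 0 ≤ p x) (hq : IsPMF q)
    (hsupp : ∀ x, 0 < q x → 0 < p x) (h : ℝ) :
    ENNReal.ofReal (Real.exp h) ≤ ∫⁻ ω, (Tstar p q h ω : ℝ≥0∞) ∂P :=
  le_lintegral_of_forall_mul_measure_le
    (fun k => (dependsOn_natCast_lt_Tstar p q h k).measurableSet) fun n =>
      (exp_mul_measure_Tstar_le_le hP hp hq hsupp h n).trans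
        (lintegral_mono fun _ => natCast_minNat_le_toENNReal _ n)

end FalseAlarm

section DetectionDelay

variable {X : Type*} (p q : X → ℝ)

def llrWalk (ν m : ℕ) (ω : ℕ → X) : ℝ :=
  ∑ i ∈ Finset.Ico ν (ν + m), Real.log (q (ω i) / p (ω i))

lemma llrWalk_succ (ν m : ℕ) (ω : ℕ → X) :
    llrWalk p q ν (m + 1) ω =
      llrWalk p q ν m ω + Real.log (q (ω (ν + m)) / p (ω (ν + m))) :=
  Finset.sum_Ico_succ_top (Nat.le_add_right ν m) _

lemma dependsOn_llrWalk (ν m : ℕ) : DependsOn (llrWalk p q ν m) (Finset.Ico ν (ν + m)) :=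
  fun _ _ hω => Finset.sum_congr rfl fun i hi => by rw [hω i hi]

variable {p q} {h : ℝ}

lemma llrWalk_lt_of_lt_Tj_sub (hp : ∀ x, 0 ≤ p x) (hq : ∀ x, 0 ≤ q x)
    (hsupp : ∀ x, 0 < q x → 0 < p x) {ν m : ℕ} {ω : ℕ → X} (hω : ∀ i, ν ≤ i → 0 < q (ω i))
    (hm0 : 0 < m) (hm : (m : ℕ∞) < Tj p q h ν ω - ν) : llrWalk p q ν m ω < h := by
  rw [lt_tsub_iff_left, ← Nat.cast_add, lt_iff_not_ge, Tj_le_iff] at hm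
  simp only [not_exists, not_and, not_le] at hm
  have hlt := hm (ν + m) (by omega) le_rfl
  rwa [sum_llr_eq_coe hp hq hsupp fun i hi => hω i (Finset.mem_Ico.1 hi).1, EReal.coe_lt_coe_iff]
    at hlt

lemma llrWalk_minNat_le (hp : ∀ x, 0 ≤ p x) (hq : ∀ x, 0 ≤ q x)
    (hsupp : ∀ x, 0 < q x → 0 < p x) (hh : 0 ≤ h) {C : ℝ}
    (hC : ∀ x, 0 < q x → Real.log (q x / p x) ≤ C) (hC0 : 0 ≤ C) {ν : ℕ} {ω : ℕ → X}
    (hω : ∀ i, ν ≤ i → 0 < q (ω i)) (n : ℕ) :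
    llrWalk p q ν (minNat (Tj p q h ν ω - ν) n) ω ≤ h + C := by
  rcases hmn : minNat (Tj p q h ν ω - ν) n with _ | m
  · simp only [llrWalk, add_zero, Finset.Ico_self, Finset.sum_empty]
    linarith
  have hm : (m : ℕ∞) < Tj p q h ν ω - ν := natCast_lt_of_lt_minNat (n := n) (by omega)
  have hS : llrWalk p q ν m ω ≤ h := by
    rcases Nat.eq_zero_or_pos m with hm0 | hm0
    · simp [hm0, llrWalk, hh]
    · exact (llrWalk_lt_of_lt_Tj_sub hp hq hsupp hω hm0 hm).le
  rw [llrWalk_succ]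
  exact add_le_add hS (hC _ (hω _ (Nat.le_add_right ν m)))

variable [Fintype X] [MeasurableSpace X] [DiscreteMeasurableSpace X]
  {P : Measure (ℕ → X)}

lemma setIntegral_llrWalk_succ_sub {ν : ℕ} (hP : HasLaw P fun i => if i < ν then p else q)
    (hq : ∀ x, 0 ≤ q x) {k : ℕ} {E : Set (ℕ → X)}
    (hE : DependsOn (· ∈ E) (Finset.Ico ν (ν + k))) :
    ∫ ω in E, (llrWalk p q ν (k + 1) ω - llrWalk p q ν k ω) ∂P = KL q p * P.real E := by
  have hlaw : (if ν + k < ν then p else q) = q := if_neg (by omega)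
  have hmul := hP.setIntegral_mul_comp_coord (by simp) (hlaw ▸ hq) hE
    (dependsOn_const (1 : ℝ) |>.mono (Set.empty_subset _)) fun x => Real.log (q x / p x)
  simp only [one_mul, setIntegral_const, smul_eq_mul, mul_one, hlaw,
    sum_mul_log_div_eq_KL hq] at hmul
  simp_rw [llrWalk_succ, add_sub_cancel_left]
  rw [hmul, mul_comm]

variable [IsProbabilityMeasure P]

theorem lintegral_minNat_Tj_sub_le (hp : ∀ x, 0 ≤ p x) (hq : ∀ x, 0 ≤ q x)
    (hsupp : ∀ x, 0 < q x → 0 < p x) (hh : 0 ≤ h) {C : ℝ}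
    (hC : ∀ x, 0 < q x → Real.log (q x / p x) ≤ C) (hC0 : 0 ≤ C) (hKL : 0 < KL q p) {ν : ℕ}
    (hP : HasLaw P fun i => if i < ν then p else q) (n : ℕ) :
    ∫⁻ ω, (minNat (Tj p q h ν ω - ν) n : ℝ≥0∞) ∂P ≤ ENNReal.ofReal ((h + C) / KL q p) := by
  have hσ : ∀ k : ℕ, MeasurableSet {ω | (k : ℕ∞) < Tj p q h ν ω - ν} := fun k =>
    (dependsOn_natCast_lt_Tj_sub p q h ν k).measurableSet
  have hS : ∀ m, Integrable (llrWalk p q ν m) P := fun m =>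
    (dependsOn_llrWalk p q ν m).integrable P
  have hwald := integral_comp_minNat hσ hS (fun k => setIntegral_llrWalk_succ_sub hP hq
    (dependsOn_natCast_lt_Tj_sub p q h ν k)) n
  have hpos : ∀ᵐ ω ∂P, ∀ i, ν ≤ i → 0 < q (ω i) := ae_all_iff.2 fun i =>
    (hP.ae_pos i).mono fun ω hω hi => by rwa [if_neg (not_lt.2 hi)] at hω
  have hbound : ∫ ω, llrWalk p q ν (minNat (Tj p q h ν ω - ν) n) ω ∂P ≤ h + C := by
    simpa using integral_mono_ae (integrable_comp_minNat hσ hS n) (integrable_const (h + C))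
      (hpos.mono fun ω hω => llrWalk_minNat_le hp hq hsupp hh hC hC0 hω n)
  simp only [llrWalk, add_zero, Finset.Ico_self, Finset.sum_empty, integral_zero,
    zero_add] at hwald
  rw [lintegral_minNat_eq_ofReal_integral hσ]
  refine ENNReal.ofReal_le_ofReal ((le_div_iff₀ hKL).2 ?_)
  rw [mul_comm, ← hwald]
  exact hbound

theorem setLIntegral_Tstar_sub_le (hp : ∀ x, 0 ≤ p x) (hq : ∀ x, 0 ≤ q x)
    (hsupp : ∀ x, 0 < q x → 0 < p x) (hh : 0 ≤ h) {C : ℝ}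
    (hC : ∀ x, 0 < q x → Real.log (q x / p x) ≤ C) (hC0 : 0 ≤ C) (hKL : 0 < KL q p) {ν : ℕ}
    (hP : HasLaw P fun i => if i < ν then p else q) {A : Set (ℕ → X)}
    (hA : DependsOn (· ∈ A) (Finset.range ν)) :
    ∫⁻ ω in A, ((Tstar p q h ω - (ν : ℕ∞)) : ℝ≥0∞) ∂P ≤
      P A * ENNReal.ofReal ((h + C) / KL q p) := by
  have hσ : ∀ k : ℕ, MeasurableSet {ω | (k : ℕ∞) < Tj p q h ν ω - ν} := fun k =>
    (dependsOn_natCast_lt_Tj_sub p q h ν k).measurableSet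
  have hdisj : ∀ n, Disjoint (Finset.range ν) (Finset.Ico ν (ν + n)) := fun n =>
    Finset.disjoint_left.2 fun i hi hi' => by simp at hi hi'; omega
  calc ∫⁻ ω in A, ((Tstar p q h ω - (ν : ℕ∞)) : ℝ≥0∞) ∂P
      ≤ ∫⁻ ω in A, ((Tj p q h ν ω - ν : ℕ∞) : ℝ≥0∞) ∂P := lintegral_mono fun ω => by
        rw [← ENat.toENNReal_sub]
        exact ENat.toENNReal_le.2 (tsub_le_tsub_right (iInf_le _ ν) _)
    _ = ⨆ n, ∫⁻ ω in A, (minNat (Tj p q h ν ω - ν) n : ℝ≥0∞) ∂P :=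
        lintegral_eq_iSup_lintegral_minNat hσ
    _ = ⨆ n, P A * ∫⁻ ω, (minNat (Tj p q h ν ω - ν) n : ℝ≥0∞) ∂P := by
        refine iSup_congr fun n => setLIntegral_eq_measure_mul_lintegral hP.1 (hdisj n) hA ?_
        have hdep := dependsOn_minNat (τ := fun ω => Tj p q h ν ω - ν) (n := n) fun k hk =>
          (dependsOn_natCast_lt_Tj_sub p q h ν k).mono
            (Finset.coe_subset.2 (Finset.Ico_subset_Ico_right (by omega : ν + k ≤ ν + n)))
        exact fun ω ω' hω => congrArg Nat.cast (hdep hω)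
    _ ≤ P A * ENNReal.ofReal ((h + C) / KL q p) :=
        iSup_le fun n => mul_le_mul_right
          (lintegral_minNat_Tj_sub_le hp hq hsupp hh hC hC0 hKL hP n) _

end DetectionDelay

theorem cusum_tradeoff_achievability_general
    [Fintype X] [MeasurableSpace X] [DiscreteMeasurableSpace X]
    (p q : X → ℝ) (hp : IsPMF p) (hq : IsPMF q)
    (hsupp : ∀ x, 0 < q x → 0 < p x)
    (D : ℝ) (hD : D = KL q p) (hDpos : 0 < D)
    (α : ℝ) (hα0 : 0 < α) (hα1 : α < 1)
    (h : ℝ) (hh : h = Real.log (1 / α))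
    (C : ℝ) (hC : C = sSup {y : ℝ | ∃ x, 0 < q x ∧ y = Real.log (q x / p x)})
    (Pinf : Measure (ℕ → X)) [IsProbabilityMeasure Pinf]
    (hPinf : HasLaw Pinf (fun _ => p))
    (Pc : ℕ → Measure (ℕ → X)) (hPcprob : ∀ ν, IsProbabilityMeasure (Pc ν))
    (hPc : ∀ ν, HasLaw (Pc ν) (fun i => if i < ν then p else q)) :
    ENNReal.ofReal (1 / α) ≤ ∫⁻ ω, (Tstar p q h ω : ℝ≥0∞) ∂Pinf ∧
    ∀ (ν : ℕ) (xs : Fin ν → X),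
      0 < Pinf {ω | (ν : ℕ∞) < Tstar p q h ω ∧ ∀ i : Fin ν, ω i = xs i} →
      (∫⁻ ω in {ω | (ν : ℕ∞) < Tstar p q h ω ∧ ∀ i : Fin ν, ω i = xs i},
          ((Tstar p q h ω - (ν : ℕ∞)) : ℝ≥0∞) ∂(Pc ν)) /
        Pc ν {ω | (ν : ℕ∞) < Tstar p q h ω ∧ ∀ i : Fin ν, ω i = xs i} ≤
        ENNReal.ofReal ((Real.log (1 / α) + C) / D) := by
  subst hh hD
  have hCle : ∀ x, 0 < q x → Real.log (q x / p x) ≤ C := fun x hx => hC ▸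
    le_csSup ((Set.finite_range fun x => Real.log (q x / p x)).subset
      (by rintro _ ⟨x, -, rfl⟩; exact ⟨x, rfl⟩)).bddAbove ⟨x, hx, rfl⟩
  have hC0 : 0 ≤ C := hDpos.le.trans (KL_le hq hCle)
  have hh0 : 0 ≤ Real.log (1 / α) := (Real.log_pos (one_lt_one_div hα0 hα1)).le
  refine ⟨?_, fun ν xs _ => ?_⟩
  · have hfa := exp_le_lintegral_Tstar hPinf hp.1 hq hsupp (Real.log (1 / α))
    rwa [Real.exp_log (one_div_pos.2 hα0)] at hfa
  · have := hPcprob ν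
    have hA : DependsOn (· ∈ {ω : ℕ → X | (ν : ℕ∞) < Tstar p q (Real.log (1 / α)) ω ∧
        ∀ i : Fin ν, ω i = xs i}) (Finset.range ν) := fun ω ω' hω => by
      have hxs : ∀ i : Fin ν, ω i = ω' i := fun i => hω i (by simp)
      simp only [Set.mem_ofPred_eq, dependsOn_natCast_lt_Tstar p q _ ν hω, hxs]
    exact ENNReal.div_le_of_le_mul ((setLIntegral_Tstar_sub_le hp.1 hq.1 hsupp hh0 hCle hC0 hDpos
      (hPc ν) hA).trans_eq (mul_comm _ _))

/-- **Classical achievability of the CUSUM trade-off.** Assume `supp q ⊆ supp p`,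
`D := D(q‖p) > 0`, `α ∈ (0,1)` and `h := log (1/α)`.  Then the CUSUM stopping
time `T*` with threshold `h` satisfies `E_∞[T*] ≥ 1/α`, and for every `ν ≥ 0`
and `x^ν` with `P_∞(T* > ν, X^ν = x^ν) > 0`,
`E_ν[T* − ν | T* > ν, X^ν = x^ν] ≤ (log(1/α) + C)/D`, where
`C = max_{x ∈ supp q} log (q x / p x)`. -/
theorem cusum_tradeoff_achievability
    [Fintype X] [Nonempty X] [MeasurableSpace X] [DiscreteMeasurableSpace X]
    (p q : X → ℝ) (hp : IsPMF p) (hq : IsPMF q)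
    (hsupp : ∀ x, 0 < q x → 0 < p x)
    (D : ℝ) (hD : D = KL q p) (hDpos : 0 < D)
    (α : ℝ) (hα0 : 0 < α) (hα1 : α < 1)
    (h : ℝ) (hh : h = Real.log (1 / α))
    (C : ℝ) (hC : C = sSup {y : ℝ | ∃ x, 0 < q x ∧ y = Real.log (q x / p x)})
    (Pinf : Measure (ℕ → X)) [IsProbabilityMeasure Pinf]
    (hPinf : HasLaw Pinf (fun _ => p))
    (Pc : ℕ → Measure (ℕ → X)) (hPcprob : ∀ ν, IsProbabilityMeasure (Pc ν))
    (hPc : ∀ ν, HasLaw (Pc ν) (fun i => if i < ν then p else q)) :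
    ENNReal.ofReal (1 / α) ≤ ∫⁻ ω, (Tstar p q h ω : ℝ≥0∞) ∂Pinf ∧
    ∀ (ν : ℕ) (xs : Fin ν → X),
      0 < Pinf {ω | (ν : ℕ∞) < Tstar p q h ω ∧ ∀ i : Fin ν, ω i = xs i} →
      (∫⁻ ω in {ω | (ν : ℕ∞) < Tstar p q h ω ∧ ∀ i : Fin ν, ω i = xs i},
          ((Tstar p q h ω - (ν : ℕ∞)) : ℝ≥0∞) ∂(Pc ν)) /
        Pc ν {ω | (ν : ℕ∞) < Tstar p q h ω ∧ ∀ i : Fin ν, ω i = xs i} ≤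
        ENNReal.ofReal ((Real.log (1 / α) + C) / D) :=
  cusum_tradeoff_achievability_general p q hp hq hsupp D hD hDpos α hα0 hα1 h hh C hC Pinf hPinf Pc
    hPcprob hPc

end QCPD
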